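/- Let L be a regular language over a finite linearly ordered alphabet Σ. If L is accepted by some NFA N (finite state set, single initial state, every state reachable from the initial state and every state able to reach a final state) that admits a co-lex order with a chain partition into p nonempty chains, then L is accepted by some DFA (finite state set, single initial state, every state reachable and useful) that admits a co-lex order with a chain partition into at most 2^p − 1 chains. In other words, width^D(L) ≤ 2^{width^N(L)} − 1. -/

import Mathlib

/-- Strict co-lexicographic order on words: compare reversed words lexicographically. -/
def colexLt {A : Type} [LinearOrder A] (α β : List A) : Prop :=
  List.Lex (· < ·) α.reverse β.reverse

/-- Co-lexicographic order (reflexive version). -/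
def colexLe {A : Type} [LinearOrder A] (α β : List A) : Prop :=
  colexLt α β ∨ α = β

/-- The prefix closure of a language. -/
def Pref {A : Type} (L : Set (List A)) : Set (List A) :=
  {α | ∃ γ : List A, α ++ γ ∈ L}

/-- The Myhill–Nerode equivalence of a language. -/
def NerodeEq {A : Type} (L : Set (List A)) (α β : List A) : Prop :=
  ∀ γ : List A, α ++ γ ∈ L ↔ β ++ γ ∈ L

/-- A monotone (nondecreasing or nonincreasing) sequence of words w.r.t. co-lex order. -/
def MonotoneSeq {A : Type} [LinearOrder A] (α : ℕ → List A) : Prop :=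
  (∀ i, colexLe (α i) (α (i + 1))) ∨ (∀ i, colexLe (α (i + 1)) (α i))

/-- A partition of the state set into `p` chains with respect to the relation `le`. -/
def IsChainPartition {Q : Type} (le : Q → Q → Prop) (p : ℕ) (f : Fin p → Set Q) : Prop :=
  (∀ q : Q, ∃! i : Fin p, q ∈ f i) ∧
  ∀ i : Fin p, ∀ u ∈ f i, ∀ v ∈ f i, le u v ∨ le v u

/-- A nondeterministic finite automaton with a single initial state. -/
structure NFA' (A Q : Type) where
  start : Q
  delta : Q → A → Set Q
  accept : Set Q

namespace NFA'

variable {A Q : Type}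

/-- Extended transition function on words. -/
def deltaStar (N : NFA' A Q) : Q → List A → Set Q
  | q, [] => {q}
  | q, a :: w => ⋃ r ∈ N.delta q a, N.deltaStar r w

/-- `N.Iw α` is the set of states reached from the initial state reading `α`. -/
def Iw (N : NFA' A Q) (α : List A) : Set Q :=
  N.deltaStar N.start α

/-- `N.Iq q` is the set of words reaching `q` from the initial state. -/
def Iq (N : NFA' A Q) (q : Q) : Set (List A) :=
  {α | q ∈ N.Iw α}

/-- The accepted language. -/
def lang (N : NFA' A Q) : Set (List A) :=
  {α | ∃ q ∈ N.accept, q ∈ N.Iw α}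

/-- Labels of transitions entering a state, with the extra bottom symbol `#`
added exactly for the initial state. -/
def lam (N : NFA' A Q) (q : Q) : Set (WithBot A) :=
  {x | ∃ (a : A) (u : Q), x = (a : WithBot A) ∧ q ∈ N.delta u a} ∪
    {x | q = N.start ∧ x = (⊥ : WithBot A)}

/-- Every state is reachable from the initial state. -/
def Reachable (N : NFA' A Q) : Prop :=
  ∀ q : Q, ∃ α : List A, q ∈ N.Iw α

/-- Every state can reach a final state. -/
def Useful (N : NFA' A Q) : Prop :=
  ∀ q : Q, ∃ (β : List A) (f : Q), f ∈ N.accept ∧ f ∈ N.deltaStar q β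

end NFA'

/-- A co-lex order on an NFA: a partial order on the states satisfying Axioms 1 and 2. -/
structure IsColexNFA {A Q : Type} [LinearOrder A] (N : NFA' A Q) (le : Q → Q → Prop) : Prop where
  refl : ∀ u, le u u
  antisymm : ∀ u v, le u v → le v u → u = v
  trans : ∀ u v w, le u v → le v w → le u w
  ax1 : ∀ u v, le u v → u ≠ v → ∀ a ∈ N.lam u, ∀ b ∈ N.lam v, a ≤ b
  ax2 : ∀ (a : A) (u v u' v' : Q),
      u ∈ N.delta u' a → v ∈ N.delta v' a → le u v → u ≠ v → le u' v'

/-- A deterministic finite automaton (with possibly undefined transitions). -/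
structure DFA' (A Q : Type) where
  start : Q
  delta : Q → A → Option Q
  accept : Set Q

namespace DFA'

variable {A Q : Type}

/-- Extended (partial) transition function on words. -/
def deltaStar (D : DFA' A Q) : Q → List A → Option Q
  | q, [] => some q
  | q, a :: w => (D.delta q a).bind fun r => D.deltaStar r w

/-- `D.Iq q` is the set of words reaching `q` from the initial state. -/
def Iq (D : DFA' A Q) (q : Q) : Set (List A) :=
  {α | D.deltaStar D.start α = some q}

/-- The accepted language. -/
def lang (D : DFA' A Q) : Set (List A) :=
  {α | ∃ q ∈ D.accept, D.deltaStar D.start α = some q}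

/-- Labels of transitions entering a state, with the extra bottom symbol `#`
added exactly for the initial state. -/
def lam (D : DFA' A Q) (q : Q) : Set (WithBot A) :=
  {x | ∃ (a : A) (u : Q), x = (a : WithBot A) ∧ D.delta u a = some q} ∪
    {x | q = D.start ∧ x = (⊥ : WithBot A)}

/-- Every state is reachable from the initial state. -/
def Reachable (D : DFA' A Q) : Prop :=
  ∀ q : Q, ∃ α : List A, D.deltaStar D.start α = some q

/-- Every state can reach a final state. -/
def Useful (D : DFA' A Q) : Prop :=
  ∀ q : Q, ∃ (β : List A) (f : Q), f ∈ D.accept ∧ D.deltaStar q β = some f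

/-- The relation `≤_D`: `u ≤_D v` iff `u = v` or every word reaching `u` is
co-lexicographically strictly smaller than every word reaching `v`. -/
def leD [LinearOrder A] (D : DFA' A Q) (u v : Q) : Prop :=
  u = v ∨ ∀ α ∈ D.Iq u, ∀ β ∈ D.Iq v, colexLt α β

/-- The strict relation `<_D`. -/
def ltD [LinearOrder A] (D : DFA' A Q) (u v : Q) : Prop :=
  u ≠ v ∧ ∀ α ∈ D.Iq u, ∀ β ∈ D.Iq v, colexLt α β

/-- A set of states of a DFA is entangled if some monotone sequence of words of
`Pref (L(D))` visits every state of the set infinitely often. -/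
def Entangled [LinearOrder A] (D : DFA' A Q) (Q' : Set Q) : Prop :=
  ∃ α : ℕ → List A, (∀ i, α i ∈ Pref D.lang) ∧ MonotoneSeq α ∧
    ∀ q ∈ Q', {i : ℕ | D.deltaStar D.start (α i) = some q}.Infinite

end DFA'

/-- A co-lex order on a DFA: a partial order on the states satisfying Axioms 1 and 2. -/
structure IsColexDFA {A Q : Type} [LinearOrder A] (D : DFA' A Q) (le : Q → Q → Prop) : Prop where
  refl : ∀ u, le u u
  antisymm : ∀ u v, le u v → le v u → u = v
  trans : ∀ u v w, le u v → le v w → le u w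
  ax1 : ∀ u v, le u v → u ≠ v → ∀ a ∈ D.lam u, ∀ b ∈ D.lam v, a ≤ b
  ax2 : ∀ (a : A) (u v u' v' : Q),
      D.delta u' a = some u → D.delta v' a = some v → le u v → u ≠ v → le u' v'

section
variable {A : Type} [LinearOrder A]

lemma colexLt_asymm {α β : List A} (h : colexLt α β) : ¬ colexLt β α :=
  (List.Lex.asymm (· < ·)).asymm _ _ h

lemma colexLt_trans {α β γ : List A} (h1 : colexLt α β) (h2 : colexLt β γ) : colexLt α γ :=
  (List.lt_iff_lex_lt _ _).mp (List.lt_trans ((List.lt_iff_lex_lt _ _).mpr h1) ((List.lt_iff_lex_lt _ _).mpr h2))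

lemma colexLt_total {α β : List A} (h : α ≠ β) : colexLt α β ∨ colexLt β α := by
  by_contra hc
  push_neg at hc
  exact h (List.reverse_injective
    ((List.Lex.trichotomous ((· < ·) : A → A → Prop)).trichotomous _ _ hc.1 hc.2))

lemma colexLt_concat_of_lt {a b : A} (α β : List A) (h : a < b) : colexLt (α ++ [a]) (β ++ [b]) := by
  unfold colexLt; simp only [List.reverse_append, List.reverse_cons, List.reverse_nil,
    List.nil_append, List.singleton_append]
  exact List.Lex.rel h

lemma colexLt_concat_iff {a : A} {α β : List A} :
    colexLt (α ++ [a]) (β ++ [a]) ↔ colexLt α β := by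
  unfold colexLt; simp only [List.reverse_append, List.reverse_cons, List.reverse_nil,
    List.nil_append, List.singleton_append]
  exact List.lex_cons_iff

lemma colexLt_last_le {a b : A} {α β : List A} (h : colexLt (α ++ [a]) (β ++ [b])) : a ≤ b := by
  unfold colexLt at h
  simp only [List.reverse_append, List.reverse_cons, List.reverse_nil,
    List.nil_append, List.singleton_append] at h
  cases h with
  | cons _ => exact le_rfl
  | rel h => exact le_of_lt h

lemma colexLt_nil_concat {a : A} (α : List A) : colexLt [] (α ++ [a]) := by
  unfold colexLt
  simp only [List.reverse_append, List.reverse_cons, List.reverse_nil,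
    List.nil_append, List.singleton_append]
  exact List.Lex.nil

lemma not_colexLt_nil (α : List A) : ¬ colexLt α [] := by
  unfold colexLt; simp

end

namespace NFA'
set_option linter.unusedSectionVars false
variable {A Q : Type} [LinearOrder A]

/-- Step of a set of states. -/
def stepSet (N : NFA' A Q) (S : Set Q) (a : A) : Set Q := ⋃ q ∈ S, N.delta q a

/-- Multi-step of a set of states. -/
def stepStar (N : NFA' A Q) (S : Set Q) (α : List A) : Set Q := ⋃ q ∈ S, N.deltaStar q α

variable (N : NFA' A Q)

@[simp] lemma stepStar_nil (S : Set Q) : N.stepStar S [] = S := by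
  simp [stepStar, deltaStar]

lemma stepStar_cons (S : Set Q) (a : A) (w : List A) :
    N.stepStar S (a :: w) = N.stepStar (N.stepSet S a) w := by
  ext x
  simp only [stepStar, stepSet, deltaStar, Set.mem_iUnion]
  constructor
  · rintro ⟨q, hq, r, hr, hx⟩; exact ⟨r, ⟨q, hq, hr⟩, hx⟩
  · rintro ⟨r, ⟨q, hq, hr⟩, hx⟩; exact ⟨q, hq, r, hr, hx⟩

@[simp] lemma stepStar_singleton (q : Q) (α : List A) : N.stepStar {q} α = N.deltaStar q α := by
  simp [stepStar]

lemma stepStar_append (S : Set Q) (α β : List A) :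
    N.stepStar S (α ++ β) = N.stepStar (N.stepStar S α) β := by
  induction α generalizing S with
  | nil => simp
  | cons a w ih => rw [List.cons_append, stepStar_cons, ih, stepStar_cons]

lemma Iw_eq_stepStar (α : List A) : N.Iw α = N.stepStar {N.start} α := by simp [Iw]

@[simp] lemma Iw_nil : N.Iw [] = {N.start} := rfl

lemma Iw_concat (α : List A) (a : A) : N.Iw (α ++ [a]) = N.stepSet (N.Iw α) a := by
  rw [Iw_eq_stepStar, stepStar_append, ← Iw_eq_stepStar, stepStar_cons, stepStar_nil]

lemma mem_stepSet {S : Set Q} {a : A} {u : Q} :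
    u ∈ N.stepSet S a ↔ ∃ q ∈ S, u ∈ N.delta q a := by simp [stepSet]

/-- Key lemma: in a co-lex ordered NFA, if `u < v`, `u ∈ I_α`, `v ∈ I_β`, then
either `α ≺ β` or both cross-memberships hold. -/
lemma key {le : Q → Q → Prop} (hC : IsColexNFA N le) :
    ∀ n (α β : List A) (u v : Q), α.length + β.length ≤ n →
      le u v → u ≠ v → u ∈ N.Iw α → v ∈ N.Iw β →
      colexLt α β ∨ (u ∈ N.Iw β ∧ v ∈ N.Iw α) := by
  intro n
  induction n with
  | zero =>
    intro α β u v hlen hle hne hu hv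
    -- α = β = []
    have hα : α = [] := by cases α <;> simp_all
    have hβ : β = [] := by cases β <;> simp_all
    subst hα; subst hβ
    simp only [Iw_nil, Set.mem_singleton_iff] at hu hv
    exact absurd (hu.trans hv.symm) hne
  | succ n ih =>
    intro α β u v hlen hle hne hu hv
    rcases List.eq_nil_or_concat β with rfl | ⟨β', b, rfl⟩
    · -- β = [] : v = start, so everything entering u is ≤ ⊥
      simp only [Iw_nil, Set.mem_singleton_iff] at hv
      have hbot : (⊥ : WithBot A) ∈ N.lam v := Or.inr ⟨hv, rfl⟩
      rcases List.eq_nil_or_concat α with rfl | ⟨α', a, rfl⟩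
      · simp only [Iw_nil, Set.mem_singleton_iff] at hu
        exact absurd (hu.trans hv.symm) hne
      · simp only [List.concat_eq_append] at hu ⊢
        rw [Iw_concat, mem_stepSet] at hu
        obtain ⟨u', _, hu⟩ := hu
        have ha : (a : WithBot A) ∈ N.lam u := Or.inl ⟨a, u', rfl, hu⟩
        exact absurd (hC.ax1 u v hle hne _ ha _ hbot) (WithBot.not_coe_le_bot a)
    · simp only [List.concat_eq_append] at hv ⊢
      rcases List.eq_nil_or_concat α with rfl | ⟨α', a, rfl⟩
      · exact Or.inl (colexLt_nil_concat β')
      · simp only [List.concat_eq_append] at hu ⊢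
        rw [Iw_concat, mem_stepSet] at hu hv
        obtain ⟨u', hu', hu⟩ := hu
        obtain ⟨v', hv', hv⟩ := hv
        have ha : (a : WithBot A) ∈ N.lam u := Or.inl ⟨a, u', rfl, hu⟩
        have hb : (b : WithBot A) ∈ N.lam v := Or.inl ⟨b, v', rfl, hv⟩
        have hab : (a : WithBot A) ≤ (b : WithBot A) := hC.ax1 u v hle hne _ ha _ hb
        rw [WithBot.coe_le_coe] at hab
        rcases lt_or_eq_of_le hab with hab | rfl
        · exact Or.inl (colexLt_concat_of_lt _ _ hab)
        · -- same last letter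
          have hle' : le u' v' := hC.ax2 a u v u' v' hu hv hle hne
          by_cases hne' : u' = v'
          · subst hne'
            refine Or.inr ⟨?_, ?_⟩
            · rw [Iw_concat, mem_stepSet]; exact ⟨u', hv', hu⟩
            · rw [Iw_concat, mem_stepSet]; exact ⟨u', hu', hv⟩
          · have hlen' : α'.length + β'.length ≤ n := by
              simp only [List.concat_eq_append, List.length_append, List.length_singleton] at hlen
              omega
            rcases ih α' β' u' v' hlen' hle' hne' hu' hv' with h | ⟨h1, h2⟩
            · exact Or.inl (colexLt_concat_iff.mpr h)
            · refine Or.inr ⟨?_, ?_⟩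
              · rw [Iw_concat, mem_stepSet]; exact ⟨u', h1, hu⟩
              · rw [Iw_concat, mem_stepSet]; exact ⟨v', h2, hv⟩

end NFA'

namespace DFA'
set_option linter.unusedSectionVars false
variable {A Q : Type} [LinearOrder A] (D : DFA' A Q)

lemma deltaStar_append (q : Q) (α β : List A) :
    D.deltaStar q (α ++ β) = (D.deltaStar q α).bind fun r => D.deltaStar r β := by
  induction α generalizing q with
  | nil => simp [deltaStar]
  | cons a w ih =>
    simp only [List.cons_append, deltaStar]
    cases D.delta q a with
    | none => simp
    | some r => simp [ih r]

lemma deltaStar_concat_some {q u : Q} {α : List A} {a : A} :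
    D.deltaStar q (α ++ [a]) = some u ↔ ∃ w, D.deltaStar q α = some w ∧ D.delta w a = some u := by
  rw [deltaStar_append]
  cases D.deltaStar q α with
  | none => simp
  | some w =>
    simp only [Option.bind_some, Option.some.injEq]
    constructor
    · intro h
      refine ⟨w, rfl, ?_⟩
      simpa [deltaStar] using h
    · rintro ⟨w', hw', h⟩
      cases hw'
      simp [deltaStar, h]

/-- The canonical order `leD` is a co-lex order on any reachable DFA. -/
lemma leD_isColex (hR : D.Reachable) : IsColexDFA D D.leD := by
  constructor
  · intro u; exact Or.inl rfl
  · intro u v h1 h2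
    by_contra hne
    rcases h1 with rfl | h1; · exact hne rfl
    rcases h2 with rfl | h2; · exact hne rfl
    obtain ⟨α, hα⟩ := hR u
    obtain ⟨β, hβ⟩ := hR v
    exact colexLt_asymm (h1 α hα β hβ) (h2 β hβ α hα)
  · intro u v w h1 h2
    rcases h1 with rfl | h1; · exact h2
    rcases h2 with rfl | h2; · exact Or.inr h1
    obtain ⟨β, hβ⟩ := hR v
    exact Or.inr fun α hα γ hγ => colexLt_trans (h1 α hα β hβ) (h2 β hβ γ hγ)
  · intro u v hle hne a ha b hb
    have h1 : ∀ α ∈ D.Iq u, ∀ β ∈ D.Iq v, colexLt α β := by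
      rcases hle with rfl | h; · exact absurd rfl hne
      exact h
    rcases ha with ⟨a₀, w, rfl, hw⟩ | ⟨rfl, rfl⟩
    · obtain ⟨γ, hγ⟩ := hR w
      have hγu : γ ++ [a₀] ∈ D.Iq u := (D.deltaStar_concat_some).mpr ⟨w, hγ, hw⟩
      rcases hb with ⟨b₀, w', rfl, hw'⟩ | ⟨hveq, rfl⟩
      · obtain ⟨γ', hγ'⟩ := hR w'
        have hγv : γ' ++ [b₀] ∈ D.Iq v := (D.deltaStar_concat_some).mpr ⟨w', hγ', hw'⟩
        exact WithBot.coe_le_coe.mpr (colexLt_last_le (h1 _ hγu _ hγv))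
      · have hnil : [] ∈ D.Iq v := by simp [DFA'.Iq, hveq, DFA'.deltaStar]
        exact absurd (h1 _ hγu _ hnil) (not_colexLt_nil _)
    · exact bot_le
  · intro a u v u' v' hu hv hle hne
    by_cases h : u' = v'
    · exact Or.inl h
    refine Or.inr fun α hα β hβ => ?_
    have h1 : ∀ α ∈ D.Iq u, ∀ β ∈ D.Iq v, colexLt α β := by
      rcases hle with rfl | h; · exact absurd rfl hne
      exact h
    have hαu : α ++ [a] ∈ D.Iq u := (D.deltaStar_concat_some).mpr ⟨u', hα, hu⟩
    have hβv : β ++ [a] ∈ D.Iq v := (D.deltaStar_concat_some).mpr ⟨v', hβ, hv⟩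
    exact colexLt_concat_iff.mp (h1 _ hαu _ hβv)

end DFA'

namespace NFA'
set_option linter.unusedSectionVars false
variable {A Q : Type} [LinearOrder A]

/-- States of the powerset DFA: nonempty reachable subsets. -/
abbrev PQ (N : NFA' A Q) : Type := {S : Set Q // S.Nonempty ∧ ∃ γ : List A, N.Iw γ = S}

noncomputable instance (N : NFA' A Q) [Finite Q] : Fintype (PQ N) := by
  unfold PQ; exact Fintype.ofFinite _

@[simp] lemma stepStar_empty (N : NFA' A Q) (α : List A) : N.stepStar ∅ α = ∅ := by
  simp [stepStar]

open Classical in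
/-- The powerset DFA. -/
noncomputable def pow (N : NFA' A Q) : DFA' A (PQ N) where
  start := ⟨{N.start}, ⟨N.start, rfl⟩, ⟨[], rfl⟩⟩
  delta S a :=
    if h : (N.stepSet S.val a).Nonempty then
      some ⟨N.stepSet S.val a, h, by
        obtain ⟨γ, hγ⟩ := S.2.2
        exact ⟨γ ++ [a], by rw [N.Iw_concat, hγ]⟩⟩
    else none
  accept := {S | ∃ q ∈ S.val, q ∈ N.accept}

variable (N : NFA' A Q)

lemma pow_delta_eq_some (S T : PQ N) (a : A) :
    (pow N).delta S a = some T ↔ T.val = N.stepSet S.val a := by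
  simp only [pow]
  split
  next h =>
    simp only [Option.some.injEq]
    constructor
    · rintro rfl; rfl
    · intro hv; exact (Subtype.ext hv).symm
  next h =>
    simp only [reduceCtorEq, false_iff]
    intro hv
    exact absurd (hv ▸ T.2.1) h

lemma pow_delta_eq_none (S : PQ N) (a : A) :
    (pow N).delta S a = none ↔ N.stepSet S.val a = ∅ := by
  simp only [pow]
  split
  next h => simp [Set.nonempty_iff_ne_empty.mp h]
  next h => simp [Set.not_nonempty_iff_eq_empty.mp h]

lemma pow_deltaStar (α : List A) (S T : PQ N) :
    (pow N).deltaStar S α = some T ↔ T.val = N.stepStar S.val α := by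
  induction α generalizing S with
  | nil =>
    simp only [DFA'.deltaStar, stepStar_nil, Option.some.injEq]
    exact ⟨fun h => h ▸ rfl, fun h => (Subtype.ext h.symm : S = T) ▸ rfl⟩
  | cons a w ih =>
    simp only [DFA'.deltaStar]
    rw [stepStar_cons]
    cases hd : (pow N).delta S a with
    | none =>
      rw [pow_delta_eq_none] at hd
      rw [hd, stepStar_empty]
      simp only [Option.bind_none, reduceCtorEq, false_iff]
      intro hv
      exact absurd (hv ▸ T.2.1) (by simp)
    | some S' =>
      rw [pow_delta_eq_some] at hd
      rw [Option.bind_some, ih, hd]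

lemma pow_start_deltaStar (α : List A) (T : PQ N) :
    (pow N).deltaStar (pow N).start α = some T ↔ T.val = N.Iw α := by
  rw [pow_deltaStar]
  show _ ↔ T.val = N.Iw α
  rw [Iw_eq_stepStar]
  rfl

lemma pow_Iq (T : PQ N) (α : List A) : α ∈ (pow N).Iq T ↔ N.Iw α = T.val := by
  rw [DFA'.Iq, Set.mem_setOf_eq, pow_start_deltaStar, eq_comm]

lemma pow_lang : (pow N).lang = N.lang := by
  ext α
  constructor
  · rintro ⟨T, hT, hd⟩
    rw [pow_start_deltaStar] at hd
    obtain ⟨q, hq, hacc⟩ := hT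
    exact ⟨q, hacc, hd ▸ hq⟩
  · rintro ⟨q, hacc, hq⟩
    refine ⟨⟨N.Iw α, ⟨q, hq⟩, ⟨α, rfl⟩⟩, ⟨q, hq, hacc⟩, ?_⟩
    rw [pow_start_deltaStar]

lemma pow_reachable : (pow N).Reachable := by
  intro T
  obtain ⟨γ, hγ⟩ := T.2.2
  exact ⟨γ, (pow_start_deltaStar N γ T).mpr hγ.symm⟩

lemma pow_useful (hU : N.Useful) : (pow N).Useful := by
  intro T
  obtain ⟨q, hq⟩ := T.2.1
  obtain ⟨β, fq, hacc, hfq⟩ := hU q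
  obtain ⟨γ, hγ⟩ := T.2.2
  have hne : (N.stepStar T.val β).Nonempty := ⟨fq, Set.mem_biUnion hq hfq⟩
  refine ⟨β, ⟨N.stepStar T.val β, hne, ⟨γ ++ β, by rw [Iw_eq_stepStar, stepStar_append,
      ← Iw_eq_stepStar, hγ]⟩⟩, ⟨fq, Set.mem_biUnion hq hfq, hacc⟩, ?_⟩
  rw [pow_deltaStar]

end NFA'

namespace NFA'
set_option linter.unusedSectionVars false
variable {A Q : Type} [LinearOrder A] (N : NFA' A Q)

open Classical in
/-- The set of chain indices touched by a subset-state. -/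
noncomputable def Tset {p : ℕ} (f : Fin p → Set Q) (S : PQ N) : Finset (Fin p) :=
  Finset.univ.filter fun i => (S.val ∩ f i).Nonempty

lemma mem_Tset {p : ℕ} (f : Fin p → Set Q) (S : PQ N) (i : Fin p) :
    i ∈ N.Tset f S ↔ (S.val ∩ f i).Nonempty := by
  simp [Tset]

lemma Tset_nonempty {p : ℕ} {le : Q → Q → Prop} {f : Fin p → Set Q}
    (hcp : IsChainPartition le p f) (S : PQ N) : (N.Tset f S).Nonempty := by
  obtain ⟨q, hq⟩ := S.2.1
  obtain ⟨i, hi, -⟩ := hcp.1 q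
  exact ⟨i, (N.mem_Tset f S i).mpr ⟨q, hq, hi⟩⟩

lemma pow_comparable {p : ℕ} {le : Q → Q → Prop} {f : Fin p → Set Q}
    (hC : IsColexNFA N le) (hcp : IsChainPartition le p f) (S₁ S₂ : PQ N)
    (hT : N.Tset f S₁ = N.Tset f S₂) :
    (pow N).leD S₁ S₂ ∨ (pow N).leD S₂ S₁ := by
  by_cases hS : S₁ = S₂
  · exact Or.inl (Or.inl hS)
  have hvals : S₁.val ≠ S₂.val := fun h => hS (Subtype.ext h)
  -- core claim: there cannot be pairs ordered in both directions
  have U : ∀ α β α' β' : List A, N.Iw α = S₁.val → N.Iw β = S₂.val →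
      N.Iw α' = S₁.val → N.Iw β' = S₂.val → colexLt α β → colexLt β' α' → False := by
    intro α β α' β' hα hβ hα' hβ' hab hba
    have hdiff : (∃ u, u ∈ S₁.val ∧ u ∉ S₂.val) ∨ (∃ u, u ∈ S₂.val ∧ u ∉ S₁.val) := by
      by_contra hcon
      push_neg at hcon
      exact hvals (Set.ext fun x => ⟨fun h => hcon.1 x h, fun h => hcon.2 x h⟩)
    rcases hdiff with ⟨u, hu1, hu2⟩ | ⟨u, hu1, hu2⟩
    · obtain ⟨i, hi, -⟩ := hcp.1 u
      have : i ∈ N.Tset f S₂ := hT ▸ (N.mem_Tset f S₁ i).mpr ⟨u, hu1, hi⟩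
      obtain ⟨v, hv1, hv2⟩ := (N.mem_Tset f S₂ i).mp this
      have hne : u ≠ v := fun h => hu2 (h ▸ hv1)
      rcases hcp.2 i u hi v hv2 with hle | hle
      · rcases N.key hC (α'.length + β'.length) α' β' u v le_rfl hle hne
            (hα' ▸ hu1) (hβ' ▸ hv1) with h | ⟨h1, -⟩
        · exact colexLt_asymm h hba
        · exact hu2 (hβ' ▸ h1)
      · rcases N.key hC (β.length + α.length) β α v u le_rfl hle (Ne.symm hne)
            (hβ ▸ hv1) (hα ▸ hu1) with h | ⟨-, h2⟩
        · exact colexLt_asymm h hab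
        · exact hu2 (hβ ▸ h2)
    · obtain ⟨i, hi, -⟩ := hcp.1 u
      have : i ∈ N.Tset f S₁ := hT ▸ (N.mem_Tset f S₂ i).mpr ⟨u, hu1, hi⟩
      obtain ⟨v, hv1, hv2⟩ := (N.mem_Tset f S₁ i).mp this
      have hne : u ≠ v := fun h => hu2 (h ▸ hv1)
      rcases hcp.2 i u hi v hv2 with hle | hle
      · rcases N.key hC (β.length + α.length) β α u v le_rfl hle hne
            (hβ ▸ hu1) (hα ▸ hv1) with h | ⟨h1, -⟩
        · exact colexLt_asymm h hab
        · exact hu2 (hα ▸ h1)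
      · rcases N.key hC (α'.length + β'.length) α' β' v u le_rfl hle (Ne.symm hne)
            (hα' ▸ hv1) (hβ' ▸ hu1) with h | ⟨-, h2⟩
        · exact colexLt_asymm h hba
        · exact hu2 (hα' ▸ h2)
  by_cases hall : ∀ α ∈ (pow N).Iq S₁, ∀ β ∈ (pow N).Iq S₂, colexLt α β
  · exact Or.inl (Or.inr hall)
  · push_neg at hall
    obtain ⟨α, hα, β, hβ, hnab⟩ := hall
    rw [pow_Iq] at hα hβ
    have hαβ : α ≠ β := fun h => hvals (hα ▸ h ▸ hβ)
    have hba : colexLt β α := (colexLt_total hαβ).resolve_left hnab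
    refine Or.inr (Or.inr fun β' hβ' α' hα' => ?_)
    rw [pow_Iq] at hβ' hα'
    by_contra hn
    have hne' : α' ≠ β' := fun h => hvals (hα' ▸ h ▸ hβ')
    have hab' : colexLt α' β' := (colexLt_total hne').resolve_right hn
    exact U α' β' α β hα' hβ' hα hβ hab' hba

end NFA'


/-- if `L` is accepted by an NFA admitting a co-lex order with a
chain partition into `p` nonempty chains, then `L` is accepted by a DFA
admitting a co-lex order with a chain partition into at most `2^p - 1` chains:
`width^D(L) ≤ 2^{width^N(L)} - 1`. -/
theorem stmt_5 {A : Type} [LinearOrder A] [Fintype A] (L : Set (List A)) (p : ℕ)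
    (hN : ∃ (Q : Type) (_ : Fintype Q) (N : NFA' A Q) (le : Q → Q → Prop)
        (f : Fin p → Set Q),
        N.Reachable ∧ N.Useful ∧ N.lang = L ∧ IsColexNFA N le ∧
        IsChainPartition le p f ∧ ∀ i, (f i).Nonempty) :
    ∃ (Q' : Type) (_ : Fintype Q') (D : DFA' A Q') (le' : Q' → Q' → Prop)
      (p' : ℕ) (f' : Fin p' → Set Q'),
      D.Reachable ∧ D.Useful ∧ D.lang = L ∧ IsColexDFA D le' ∧
      IsChainPartition le' p' f' ∧ p' ≤ 2 ^ p - 1 := by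
  classical
  obtain ⟨Q, _, N, le, f, hRe, hUs, hL, hC, hcp, -⟩ := hN
  set p' := Fintype.card {T : Finset (Fin p) // T.Nonempty} with hp'
  have e : {T : Finset (Fin p) // T.Nonempty} ≃ Fin p' := Fintype.equivFin _
  refine ⟨NFA'.PQ N, inferInstance, NFA'.pow N, (NFA'.pow N).leD, p',
    fun j => {S | N.Tset f S = (e.symm j).val}, N.pow_reachable, N.pow_useful hUs,
    (N.pow_lang).trans hL, (NFA'.pow N).leD_isColex (N.pow_reachable), ⟨?_, ?_⟩, ?_⟩
  · intro S
    refine ⟨e ⟨N.Tset f S, N.Tset_nonempty hcp S⟩, ?_, ?_⟩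
    · show N.Tset f S = (e.symm (e _)).val
      rw [Equiv.symm_apply_apply]
    · intro j hj
      have : e.symm j = ⟨N.Tset f S, N.Tset_nonempty hcp S⟩ := Subtype.ext hj.symm
      rw [← this, Equiv.apply_symm_apply]
  · intro j S₁ h1 S₂ h2
    exact N.pow_comparable hC hcp S₁ S₂ (h1.trans h2.symm)
  · have hlt : p' < 2 ^ p := by
      have h2 : Fintype.card (Finset (Fin p)) = 2 ^ p := by
        rw [Fintype.card_finset, Fintype.card_fin]
      rw [hp', ← h2]
      exact Fintype.card_subtype_lt (x := (∅ : Finset (Fin p))) (by simp)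
    omega
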